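/- For every r∈(0,1), ψ((1−r)/(1+r)) · ψ((1−r')/(1+r')) = 1, where r' = √(1−r²). -/

import Mathlib

open Real Set Filter Topology

/-- Complete elliptic integral of the first kind. -/
noncomputable def EK (r : ℝ) : ℝ :=
  ∫ t in (0:ℝ)..(π/2), 1 / Real.sqrt (1 - r^2 * Real.sin t ^ 2)

/-- Complete elliptic integral of the second kind. -/
noncomputable def EE (r : ℝ) : ℝ :=
  ∫ t in (0:ℝ)..(π/2), Real.sqrt (1 - r^2 * Real.sin t ^ 2)

/-- K'(r) = K(√(1-r²)). -/
noncomputable def EK' (r : ℝ) : ℝ := EK (Real.sqrt (1 - r^2))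

/-- E'(r) = E(√(1-r²)). -/
noncomputable def EE' (r : ℝ) : ℝ := EE (Real.sqrt (1 - r^2))

/-- The function ψ. -/
noncomputable def psi (r : ℝ) : ℝ :=
  2 * (EE r - (1 - r) * EK r) / (EE' r - r * EK' r)

/-!
Landen's transformation: for `0 ≤ k < 1` and `ℓ = 2√k / (1 + k)`, the substitution
`sin φ = (1 + k) sin θ / (1 + k sin² θ)` gives `K(ℓ) = (1 + k) K(k)` and
`E(ℓ) = (2 E(k) - k'² K(k)) / (1 + k)`.  For `s = (1 - ρ) / (1 + ρ)` one has `s' = ℓ(ρ)` and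
`ℓ(s) = ρ'`, so both the denominator and the numerator of `ψ(s)` are Landen images, and
`ψ(s) = (E(ρ') - ρ² K(ρ')) / (E(ρ) - ρ'² K(ρ))`.  Exchanging `ρ` and `ρ'` inverts this quotient.
-/

namespace Landen

variable {k θ : ℝ}

lemma one_sub_sq_mul_sin_sq_pos (hk : k ^ 2 < 1) (t : ℝ) : 0 < 1 - k ^ 2 * sin t ^ 2 := by
  nlinarith [sin_sq_le_one t, sq_nonneg (k * sin t)]

lemma continuous_sqrt_one_sub_sq_mul_sin_sq (k : ℝ) :
    Continuous fun t => √(1 - k ^ 2 * sin t ^ 2) := by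
  fun_prop

lemma continuous_one_div_sqrt_one_sub_sq_mul_sin_sq (hk : k ^ 2 < 1) :
    Continuous fun t => 1 / √(1 - k ^ 2 * sin t ^ 2) :=
  continuous_const.div (continuous_sqrt_one_sub_sq_mul_sin_sq k)
    fun t => (sqrt_pos.2 (one_sub_sq_mul_sin_sq_pos hk t)).ne'

lemma one_add_mul_sin_sq_pos (hk : 0 ≤ k) (t : ℝ) : 0 < 1 + k * sin t ^ 2 := by
  positivity

noncomputable def landenModulus (k : ℝ) : ℝ := 2 * √k / (1 + k)

noncomputable def landenSin (k θ : ℝ) : ℝ := (1 + k) * sin θ / (1 + k * sin θ ^ 2)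

noncomputable def landenAngle (k θ : ℝ) : ℝ := arcsin (landenSin k θ)

noncomputable def landenAngleDeriv (k θ : ℝ) : ℝ :=
  (1 + k) * (1 - k * sin θ ^ 2) / ((1 + k * sin θ ^ 2) * √(1 - k ^ 2 * sin θ ^ 2))

lemma abs_landenSin_le_one (hk0 : 0 ≤ k) (hk1 : k ≤ 1) (θ : ℝ) : |landenSin k θ| ≤ 1 := by
  have hs := abs_sin_le_one θ
  rw [landenSin, abs_div, abs_mul, abs_of_pos (by linarith : 0 < 1 + k),
    abs_of_pos (one_add_mul_sin_sq_pos hk0 θ), div_le_one (one_add_mul_sin_sq_pos hk0 θ),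
    ← sq_abs (sin θ)]
  nlinarith [mul_nonneg (sub_nonneg.2 hs) (sub_nonneg.2 (mul_le_one₀ hk1 (abs_nonneg _) hs))]

lemma abs_landenSin_lt_one (hk0 : 0 ≤ k) (hk1 : k ≤ 1) (hθ : 0 < cos θ) :
    |landenSin k θ| < 1 := by
  have hs : |sin θ| < 1 := by
    rw [← sq_lt_one_iff_abs_lt_one, sin_sq]
    nlinarith
  rw [landenSin, abs_div, abs_mul, abs_of_pos (by linarith : 0 < 1 + k),
    abs_of_pos (one_add_mul_sin_sq_pos hk0 θ), div_lt_one (one_add_mul_sin_sq_pos hk0 θ),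
    ← sq_abs (sin θ)]
  nlinarith [mul_pos (sub_pos.2 hs)
    (sub_pos.2 (mul_lt_one_of_nonneg_of_lt_one_right hk1 (abs_nonneg _) hs))]

lemma sqrt_one_sub_landenSin_sq (hk0 : 0 ≤ k) (hk1 : k ≤ 1) (hθ : 0 ≤ cos θ) :
    √(1 - landenSin k θ ^ 2) = cos θ * √(1 - k ^ 2 * sin θ ^ 2) / (1 + k * sin θ ^ 2) := by
  have hΔ : 0 ≤ 1 - k ^ 2 * sin θ ^ 2 := by
    nlinarith [sin_sq_le_one θ, mul_le_one₀ hk1 hk0 hk1, sq_nonneg (sin θ)]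
  have hd := (one_add_mul_sin_sq_pos hk0 θ).ne'
  rw [← sqrt_sq (by positivity : 0 ≤ cos θ * √(1 - k ^ 2 * sin θ ^ 2) / (1 + k * sin θ ^ 2))]
  congr 1
  rw [div_pow, mul_pow, sq_sqrt hΔ, landenSin, cos_sq']
  field_simp
  ring

lemma sqrt_one_sub_landenModulus_sq_mul_sin_landenAngle_sq (hk0 : 0 ≤ k) (hk1 : k < 1) (θ : ℝ) :
    √(1 - landenModulus k ^ 2 * sin (landenAngle k θ) ^ 2)
      = (1 - k * sin θ ^ 2) / (1 + k * sin θ ^ 2) := by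
  have hd := (one_add_mul_sin_sq_pos hk0 θ).ne'
  have hn : 0 ≤ 1 - k * sin θ ^ 2 := by nlinarith [sin_sq_le_one θ]
  rw [landenAngle, sin_arcsin' (abs_le.1 (abs_landenSin_le_one hk0 hk1.le θ)),
    ← sqrt_sq (by positivity : 0 ≤ (1 - k * sin θ ^ 2) / (1 + k * sin θ ^ 2))]
  congr 1
  rw [landenModulus, landenSin, div_pow, mul_pow, sq_sqrt hk0]
  field_simp
  ring

lemma landenModulus_sq_lt_one (hk0 : 0 ≤ k) (hk1 : k < 1) : landenModulus k ^ 2 < 1 := by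
  rw [landenModulus, div_pow, mul_pow, sq_sqrt hk0, div_lt_one (by positivity)]
  nlinarith

lemma landenAngle_zero (k : ℝ) : landenAngle k 0 = 0 := by
  simp [landenAngle, landenSin]

lemma landenAngle_pi_div_two (hk : 0 ≤ k) : landenAngle k (π / 2) = π / 2 := by
  have : 1 + k ≠ 0 := by linarith
  simp [landenAngle, landenSin, this]

lemma hasDerivAt_landenAngle (hk0 : 0 ≤ k) (hk1 : k < 1) (hθ : 0 < cos θ) :
    HasDerivAt (landenAngle k) (landenAngleDeriv k θ) θ := by
  have hd := one_add_mul_sin_sq_pos hk0 θ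
  obtain ⟨hw₁, hw₂⟩ := abs_lt.1 (abs_landenSin_lt_one hk0 hk1.le hθ)
  have hΔ := one_sub_sq_mul_sin_sq_pos (by nlinarith : k ^ 2 < 1) θ
  have hsin : HasDerivAt (landenSin k)
      ((1 + k) * cos θ * (1 - k * sin θ ^ 2) / (1 + k * sin θ ^ 2) ^ 2) θ := by
    have h := ((hasDerivAt_sin θ).const_mul (1 + k)).div
      ((((hasDerivAt_sin θ).pow 2).const_mul k).const_add 1) hd.ne'
    simp only [Pi.pow_apply] at h
    refine h.congr_deriv ?_
    field_simp
    ring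
  refine ((hasDerivAt_arcsin hw₁.ne' hw₂.ne).comp θ hsin).congr_deriv ?_
  rw [sqrt_one_sub_landenSin_sq hk0 hk1.le hθ.le, landenAngleDeriv]
  field_simp

lemma continuous_landenAngle (hk : 0 ≤ k) : Continuous (landenAngle k) :=
  continuous_arcsin.comp <| by
    unfold landenSin
    exact Continuous.div (by fun_prop) (by fun_prop) fun t => (one_add_mul_sin_sq_pos hk t).ne'

lemma continuous_landenAngleDeriv (hk0 : 0 ≤ k) (hk1 : k < 1) :
    Continuous (landenAngleDeriv k) := by
  have hk2 : k ^ 2 < 1 := by nlinarith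
  unfold landenAngleDeriv
  refine Continuous.div (by fun_prop) (by fun_prop) fun t => ?_
  have := one_add_mul_sin_sq_pos hk0 t
  have := sqrt_pos.2 (one_sub_sq_mul_sin_sq_pos hk2 t)
  positivity

lemma integral_landenAngleDeriv_mul_comp (hk0 : 0 ≤ k) (hk1 : k < 1) {g : ℝ → ℝ}
    (hg : Continuous g) :
    ∫ θ in (0 : ℝ)..π / 2, landenAngleDeriv k θ * g (landenAngle k θ)
      = ∫ φ in (0 : ℝ)..π / 2, g φ := by
  have hπ : (0 : ℝ) ≤ π / 2 := by positivity
  have h := intervalIntegral.integral_comp_mul_deriv'' (a := 0) (b := π / 2)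
    (continuous_landenAngle hk0).continuousOn
    (fun θ hθ => ?_) (continuous_landenAngleDeriv hk0 hk1).continuousOn hg.continuousOn
  · simpa [landenAngle_zero, landenAngle_pi_div_two hk0, mul_comm] using h
  · rw [min_eq_left hπ, max_eq_right hπ] at hθ
    exact (hasDerivAt_landenAngle hk0 hk1
      (cos_pos_of_mem_Ioo ⟨by linarith [hθ.1], hθ.2⟩)).hasDerivWithinAt

theorem EK_landenModulus (hk0 : 0 ≤ k) (hk1 : k < 1) :
    EK (landenModulus k) = (1 + k) * EK k := by
  have hk2 : k ^ 2 < 1 := by nlinarith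
  rw [EK, ← integral_landenAngleDeriv_mul_comp hk0 hk1
      (continuous_one_div_sqrt_one_sub_sq_mul_sin_sq (landenModulus_sq_lt_one hk0 hk1)),
    EK, ← intervalIntegral.integral_const_mul]
  refine intervalIntegral.integral_congr fun θ _ => ?_
  have hn : 0 < 1 - k * sin θ ^ 2 := by nlinarith [sin_sq_le_one θ]
  have hd := one_add_mul_sin_sq_pos hk0 θ
  have hq := sqrt_pos.2 (one_sub_sq_mul_sin_sq_pos hk2 θ)
  simp only [sqrt_one_sub_landenModulus_sq_mul_sin_landenAngle_sq hk0 hk1, landenAngleDeriv]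
  field_simp

/-- After the substitution `landenAngle`, the integrands of the two sides of the Landen formula
for `EE` differ by the derivative of this function, which vanishes at `0` and `π / 2`. -/
noncomputable def landenCorrection (k θ : ℝ) : ℝ :=
  2 * k / (1 + k) * (sin θ * cos θ * √(1 - k ^ 2 * sin θ ^ 2) / (1 + k * sin θ ^ 2))

lemma hasDerivAt_landenCorrection (hk0 : 0 ≤ k) (hk1 : k < 1) (θ : ℝ) :
    HasDerivAt (landenCorrection k)
      (landenAngleDeriv k θ * ((1 - k * sin θ ^ 2) / (1 + k * sin θ ^ 2))
        - (2 / (1 + k) * √(1 - k ^ 2 * sin θ ^ 2)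
          - (1 - k ^ 2) / (1 + k) * (1 / √(1 - k ^ 2 * sin θ ^ 2)))) θ := by
  have hΔ := one_sub_sq_mul_sin_sq_pos (by nlinarith : k ^ 2 < 1) θ
  have hd := one_add_mul_sin_sq_pos hk0 θ
  have hsqrt : HasDerivAt (fun θ => √(1 - k ^ 2 * sin θ ^ 2))
      (-(k ^ 2 * (2 * sin θ * cos θ)) / (2 * √(1 - k ^ 2 * sin θ ^ 2))) θ := by
    have h := (((hasDerivAt_sin θ).pow 2).const_mul (k ^ 2)).const_sub 1
    simp only [Pi.pow_apply] at h
    refine ((hasDerivAt_sqrt hΔ.ne').comp θ h).congr_deriv ?_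
    ring
  have hden := (((hasDerivAt_sin θ).pow 2).const_mul k).const_add 1
  simp only [Pi.pow_apply] at hden
  refine ((((hasDerivAt_sin θ).mul (hasDerivAt_cos θ)).mul hsqrt).div hden
    hd.ne' |>.const_mul (2 * k / (1 + k))).congr_deriv ?_
  have hq : √(1 - k ^ 2 * sin θ ^ 2) ^ 2 = 1 - k ^ 2 * sin θ ^ 2 := sq_sqrt hΔ.le
  have hc : cos θ ^ 2 = 1 - sin θ ^ 2 := cos_sq' θ
  have hq0 : √(1 - k ^ 2 * sin θ ^ 2) ≠ 0 := (sqrt_pos.2 hΔ).ne'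
  simp only [landenAngleDeriv, Pi.mul_apply]
  set s := sin θ
  set c := cos θ
  set q := √(1 - k ^ 2 * s ^ 2)
  field_simp
  linear_combination 2 * (1 + k * c ^ 2 + k * s ^ 2 - k ^ 2 * c ^ 2 * s ^ 2) * hq
    + 2 * k * (1 - k * s ^ 2 - 2 * k ^ 2 * s ^ 2) * hc

lemma landenCorrection_zero (k : ℝ) : landenCorrection k 0 = 0 := by
  simp [landenCorrection]

lemma landenCorrection_pi_div_two (k : ℝ) : landenCorrection k (π / 2) = 0 := by
  simp [landenCorrection]

theorem EE_landenModulus (hk0 : 0 ≤ k) (hk1 : k < 1) :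
    EE (landenModulus k) = 2 / (1 + k) * EE k - (1 - k ^ 2) / (1 + k) * EK k := by
  have hk2 : k ^ 2 < 1 := by nlinarith
  have hf : Continuous fun θ =>
      landenAngleDeriv k θ * ((1 - k * sin θ ^ 2) / (1 + k * sin θ ^ 2)) :=
    (continuous_landenAngleDeriv hk0 hk1).mul <|
      Continuous.div (by fun_prop) (by fun_prop) fun t => (one_add_mul_sin_sq_pos hk0 t).ne'
  have hE : Continuous fun θ => 2 / (1 + k) * √(1 - k ^ 2 * sin θ ^ 2) :=
    continuous_const.mul (continuous_sqrt_one_sub_sq_mul_sin_sq k)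
  have hK : Continuous fun θ => (1 - k ^ 2) / (1 + k) * (1 / √(1 - k ^ 2 * sin θ ^ 2)) :=
    continuous_const.mul (continuous_one_div_sqrt_one_sub_sq_mul_sin_sq hk2)
  have hg : Continuous fun θ => 2 / (1 + k) * √(1 - k ^ 2 * sin θ ^ 2)
      - (1 - k ^ 2) / (1 + k) * (1 / √(1 - k ^ 2 * sin θ ^ 2)) := hE.sub hK
  have hFTC := intervalIntegral.integral_eq_sub_of_hasDerivAt (a := 0) (b := π / 2)
    (fun θ _ => hasDerivAt_landenCorrection hk0 hk1 θ) ((hf.sub hg).intervalIntegrable _ _)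
  rw [landenCorrection_zero, landenCorrection_pi_div_two, sub_self,
    intervalIntegral.integral_sub (hf.intervalIntegrable _ _)
      (hg.intervalIntegrable _ _), sub_eq_zero] at hFTC
  rw [EE, ← integral_landenAngleDeriv_mul_comp hk0 hk1 (continuous_sqrt_one_sub_sq_mul_sin_sq _)]
  simp only [sqrt_one_sub_landenModulus_sq_mul_sin_landenAngle_sq hk0 hk1]
  rw [hFTC, intervalIntegral.integral_sub (hE.intervalIntegrable _ _) (hK.intervalIntegrable _ _),
    intervalIntegral.integral_const_mul, intervalIntegral.integral_const_mul, EE, EK]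

end Landen

open Landen

/-- `E − k'² K`; it equals `k² ∫₀^{π/2} cos² t / √(1 − k² sin² t) dt`. -/
noncomputable def ellipticGap (k : ℝ) : ℝ := EE k - (1 - k ^ 2) * EK k

lemma ellipticGap_pos {k : ℝ} (hk0 : 0 < k) (hk1 : k < 1) : 0 < ellipticGap k := by
  have hk2 : k ^ 2 < 1 := by nlinarith
  have hE := continuous_sqrt_one_sub_sq_mul_sin_sq k
  have hK : Continuous fun t => (1 - k ^ 2) * (1 / √(1 - k ^ 2 * sin t ^ 2)) :=
    continuous_const.mul (continuous_one_div_sqrt_one_sub_sq_mul_sin_sq hk2)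
  rw [ellipticGap, EE, EK, ← intervalIntegral.integral_const_mul,
    ← intervalIntegral.integral_sub (hE.intervalIntegrable _ _) (hK.intervalIntegrable _ _)]
  refine intervalIntegral.intervalIntegral_pos_of_pos_on ((hE.sub hK).intervalIntegrable _ _)
    (fun t ht => ?_) (by positivity)
  have hΔ := one_sub_sq_mul_sin_sq_pos hk2 t
  have hc : 0 < cos t := cos_pos_of_mem_Ioo ⟨by linarith [ht.1, pi_pos], ht.2⟩
  rw [sub_pos, mul_one_div, div_lt_iff₀ (sqrt_pos.2 hΔ), mul_self_sqrt hΔ.le]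
  nlinarith [sin_sq_add_cos_sq t, mul_pos (pow_pos hk0 2) (pow_pos hc 2)]

lemma sqrt_one_sub_sq_one_sub_div_one_add {ρ : ℝ} (hρ : 0 ≤ ρ) :
    √(1 - ((1 - ρ) / (1 + ρ)) ^ 2) = landenModulus ρ := by
  rw [← sqrt_sq (by unfold landenModulus; positivity : 0 ≤ landenModulus ρ)]
  congr 1
  simp only [landenModulus, div_pow, mul_pow, sq_sqrt hρ]
  field_simp
  ring

lemma landenModulus_one_sub_div_one_add {ρ : ℝ} (hρ0 : 0 ≤ ρ) (hρ1 : ρ ≤ 1) :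
    landenModulus ((1 - ρ) / (1 + ρ)) = √(1 - ρ ^ 2) := by
  have hs : 0 ≤ (1 - ρ) / (1 + ρ) := div_nonneg (by linarith) (by linarith)
  rw [← sqrt_sq (by unfold landenModulus; positivity : 0 ≤ landenModulus ((1 - ρ) / (1 + ρ)))]
  congr 1
  simp only [landenModulus, div_pow, mul_pow, sq_sqrt hs]
  field_simp
  ring

theorem psi_one_sub_div_one_add {ρ : ℝ} (hρ0 : 0 < ρ) (hρ1 : ρ < 1) :
    psi ((1 - ρ) / (1 + ρ)) = ellipticGap (√(1 - ρ ^ 2)) / ellipticGap ρ := by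
  have hs0 : 0 ≤ (1 - ρ) / (1 + ρ) := div_nonneg (by linarith) (by linarith)
  have hs1 : (1 - ρ) / (1 + ρ) < 1 := by rw [div_lt_one (by linarith)]; linarith
  have hρ : 1 + ρ ≠ 0 := by linarith
  have hnum : ellipticGap (√(1 - ρ ^ 2))
      = (1 + ρ) * (EE ((1 - ρ) / (1 + ρ)) - (1 - (1 - ρ) / (1 + ρ)) * EK ((1 - ρ) / (1 + ρ))) := by
    rw [ellipticGap, sq_sqrt (by nlinarith), ← landenModulus_one_sub_div_one_add hρ0.le hρ1.le,
      EE_landenModulus hs0 hs1, EK_landenModulus hs0 hs1]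
    field_simp
    ring
  have hden : EE' ((1 - ρ) / (1 + ρ)) - (1 - ρ) / (1 + ρ) * EK' ((1 - ρ) / (1 + ρ))
      = 2 / (1 + ρ) * ellipticGap ρ := by
    rw [EE', EK', sqrt_one_sub_sq_one_sub_div_one_add hρ0.le, EE_landenModulus hρ0.le hρ1,
      EK_landenModulus hρ0.le hρ1, ellipticGap]
    field_simp
    ring
  have hgap := (ellipticGap_pos hρ0 hρ1).ne'
  rw [psi, hden, hnum]
  field_simp

theorem psi_identity (r : ℝ) (hr : r ∈ Ioo (0:ℝ) 1) :
    psi ((1 - r) / (1 + r)) *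
      psi ((1 - Real.sqrt (1 - r^2)) / (1 + Real.sqrt (1 - r^2))) = 1 := by
  obtain ⟨hr0, hr1⟩ := hr
  have hr2 : 0 < 1 - r ^ 2 := by nlinarith
  have hr'0 : 0 < √(1 - r ^ 2) := sqrt_pos.2 hr2
  have hr'1 : √(1 - r ^ 2) < 1 := (sqrt_lt' one_pos).2 (by nlinarith)
  have hr'' : √(1 - √(1 - r ^ 2) ^ 2) = r := by
    rw [sq_sqrt hr2.le, sub_sub_cancel, sqrt_sq hr0.le]
  rw [psi_one_sub_div_one_add hr0 hr1, psi_one_sub_div_one_add hr'0 hr'1, hr'']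
  have := (ellipticGap_pos hr0 hr1).ne'
  have := (ellipticGap_pos hr'0 hr'1).ne'
  field_simp
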